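/- Multiplicative Dirichlet theorem for systems of linear forms: let m, n ∈ ℕ, k = m + n, and suppose t_1, ..., t_k are nonnegative integers with t_1 + ... + t_m = t_{m+1} + ... + t_{m+n}. For any m linear forms Y_1, ..., Y_m over F = F_q((T⁻¹)) in n variables, there exist q = (q_1, ..., q_n) ∈ Λ^n \ {0} and p = (p_1, ..., p_m) ∈ Λ^m such that |Y_i(q) − p_i| < e^{−t_i} for i = 1, ..., m and |q_j| ≤ e^{t_{m+j}} for j = 1, ..., n. -/

import Mathlib

open scoped Classical in
/-- The absolute value `|a| = e^(deg a)` on `F = F_q((T⁻¹))`.  We realize `F` as the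
field of Laurent series `F_q((X))` via `X = T⁻¹`, so that `deg a = −(order a)`. -/
noncomputable def lAbs {Fq : Type*} [Field Fq] (a : LaurentSeries Fq) : ℝ :=
  if a = 0 then 0 else Real.exp (-(a.order : ℝ))

/-- The element `T ∈ F = F_q((T⁻¹))` (i.e. `X⁻¹` in the Laurent series realization). -/
noncomputable def Tvar (Fq : Type*) [Field Fq] : LaurentSeries Fq :=
  HahnSeries.single (-1 : ℤ) 1

/-- The embedding of `Λ = F_q[T]` into `F = F_q((T⁻¹))`, sending a polynomial `p` to `p(T)`. -/
noncomputable def polyToF {Fq : Type*} [Field Fq] (p : Polynomial Fq) : LaurentSeries Fq :=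
  Polynomial.aeval (Tvar Fq) p

/-!
Polynomial vectors `q` with `deg q_j ≤ s_j` form an `F_q`-space of dimension `∑ s_j + n`, while
asking the coefficients of `T⁻¹, …, T^(-t_i)` in every `Y_i(q)` to vanish is only `∑ t_i` linear
conditions; as `n > 0` there is a nonzero solution `q`. Taking for `p_i` the polynomial part of
`Y_i(q)`, the difference `Y_i(q) - p_i` has no terms of degree `≥ -t_i`.
-/

open Polynomial

section

variable {Fq : Type*} [Field Fq]

lemma polyToF_monomial (k : ℕ) (a : Fq) :
    polyToF (monomial k a) = HahnSeries.single (-(k : ℤ)) a := by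
  rw [polyToF, aeval_monomial, LaurentSeries.algebraMap_apply, HahnSeries.C_apply, Tvar,
    HahnSeries.single_pow, one_pow, HahnSeries.single_mul_single, zero_add, mul_one, smul_neg,
    nsmul_one]

lemma polyToF_smul (a : Fq) (p : Fq[X]) : polyToF (a • p) = HahnSeries.C a * polyToF p := by
  rw [polyToF, polyToF, smul_eq_C_mul, map_mul, aeval_C, LaurentSeries.algebraMap_apply]

lemma coeff_polyToF_neg (p : Fq[X]) (k : ℕ) : (polyToF p).coeff (-(k : ℤ)) = p.coeff k := by
  induction p using Polynomial.induction_on' with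
  | add p q hp hq => simp only [polyToF, map_add, HahnSeries.coeff_add] at *; rw [hp, hq, coeff_add]
  | monomial j a =>
    rw [polyToF_monomial, HahnSeries.coeff_single, coeff_monomial]
    simp [eq_comm]

lemma coeff_polyToF_of_pos (p : Fq[X]) {d : ℤ} (hd : 0 < d) : (polyToF p).coeff d = 0 := by
  induction p using Polynomial.induction_on' with
  | add p q hp hq => simp only [polyToF, map_add, HahnSeries.coeff_add] at *; rw [hp, hq, add_zero]
  | monomial j a =>
    rw [polyToF_monomial, HahnSeries.coeff_single_of_ne]
    omega

lemma lAbs_le_exp_neg_of_coeff_eq_zero {a : LaurentSeries Fq} {r : ℤ}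
    (h : ∀ d < r, a.coeff d = 0) : lAbs a ≤ Real.exp (-r) := by
  unfold lAbs
  split_ifs with ha
  · positivity
  · have hr : r ≤ a.order := not_lt.mp fun hlt => ha (HahnSeries.coeff_order_eq_zero.mp (h _ hlt))
    gcongr

lemma lAbs_lt_exp_neg_of_coeff_eq_zero {a : LaurentSeries Fq} {t : ℕ}
    (h : ∀ d ≤ (t : ℤ), a.coeff d = 0) : lAbs a < Real.exp (-t) :=
  calc lAbs a ≤ Real.exp (-((t + 1 : ℤ) : ℝ)) :=
        lAbs_le_exp_neg_of_coeff_eq_zero fun d hd => h d (Int.lt_add_one_iff.mp hd)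
    _ < Real.exp (-t) := by gcongr; push_cast; linarith

lemma lAbs_polyToF_le {p : Fq[X]} {s : ℕ} (hp : p.degree ≤ s) :
    lAbs (polyToF p) ≤ Real.exp s := by
  have := lAbs_le_exp_neg_of_coeff_eq_zero (a := polyToF p) (r := -s) fun d hd => by
    obtain ⟨k, rfl⟩ : ∃ k : ℕ, d = -k := ⟨(-d).toNat, by omega⟩
    rw [coeff_polyToF_neg]
    exact coeff_eq_zero_of_degree_lt (hp.trans_lt (by exact_mod_cast (by omega : s < k)))
  simpa using this

lemma exists_polyToF_coeff_eq (a : LaurentSeries Fq) :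
    ∃ p : Fq[X], ∀ d ≤ 0, (polyToF p).coeff d = a.coeff d := by
  refine ⟨∑ k ∈ Finset.range ((-a.order).toNat + 1), monomial k (a.coeff (-k)), fun d hd => ?_⟩
  obtain ⟨k, rfl⟩ : ∃ k : ℕ, d = -k := ⟨(-d).toNat, by omega⟩
  rw [coeff_polyToF_neg, finsetSum_coeff]
  simp only [coeff_monomial, Finset.sum_ite_eq', Finset.mem_range]
  split_ifs with hk
  · rfl
  · exact (HahnSeries.coeff_eq_zero_of_lt_order (by omega)).symm

variable {ι κ : Type*} [Fintype κ]

/-- For `q` with `deg q_j ≤ s_j`, the coefficients of `T⁻¹, …, T^(-t_i)` in each `Y_i(q)`. -/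
noncomputable def fracCoeffs (Y : Matrix ι κ (LaurentSeries Fq)) (t : ι → ℕ) (s : κ → ℕ) :
    (Π j, degreeLT Fq (s j + 1)) →ₗ[Fq] Π i, Fin (t i) → Fq where
  toFun q i k := (∑ j, Y i j * polyToF (q j : Fq[X])).coeff (k + 1)
  map_add' q q' := by
    ext i k
    simp [polyToF, mul_add, Finset.sum_add_distrib]
  map_smul' a q := by
    ext i k
    have (j : κ) (x : LaurentSeries Fq) :
        Y i j * (HahnSeries.C a * x) = HahnSeries.C a * (Y i j * x) := mul_left_comm _ _ _
    simp only [Pi.smul_apply, Submodule.coe_smul, polyToF_smul, this, ← Finset.mul_sum]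
    rw [HahnSeries.C_mul_eq_smul, HahnSeries.coeff_smul]
    rfl

theorem exists_ne_zero_degree_le_coeff_linearForms_eq_zero [Fintype ι]
    (Y : Matrix ι κ (LaurentSeries Fq)) (t : ι → ℕ) (s : κ → ℕ) (h : ∑ i, t i < ∑ j, (s j + 1)) :
    ∃ q : κ → Fq[X], q ≠ 0 ∧ (∀ j, (q j).degree ≤ s j) ∧
      ∀ i, ∀ d : ℤ, 0 < d → d ≤ t i → (∑ j, Y i j * polyToF (q j)).coeff d = 0 := by
  have hrank : Module.finrank Fq (Π i, Fin (t i) → Fq)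
      < Module.finrank Fq (Π j, degreeLT Fq (s j + 1)) := by
    simpa [Module.finrank_pi_fintype, (degreeLTEquiv Fq _).finrank_eq] using h
  obtain ⟨q, hq, hq0⟩ := (Submodule.ne_bot_iff _).mp
    (LinearMap.ker_ne_bot_of_finrank_lt (f := fracCoeffs Y t s) hrank)
  refine ⟨fun j => q j, fun h0 => hq0 (funext fun j => Subtype.ext (congrFun h0 j)),
    fun j => Order.le_of_lt_succ (mem_degreeLT.mp (q j).2), fun i d hd hdt => ?_⟩
  obtain ⟨k, rfl⟩ : ∃ k : ℕ, d = k + 1 := ⟨(d - 1).toNat, by omega⟩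
  exact congrFun (congrFun (LinearMap.mem_ker.mp hq) i) ⟨k, by omega⟩

end

theorem multiplicative_dirichlet_general {Fq : Type*} [Field Fq]
    (m n : ℕ) (hn : 0 < n)
    (t : Fin m → ℕ) (s : Fin n → ℕ) (hts : ∑ i, t i = ∑ j, s j)
    (Y : Matrix (Fin m) (Fin n) (LaurentSeries Fq)) :
    ∃ q : Fin n → Polynomial Fq, q ≠ 0 ∧ ∃ p : Fin m → Polynomial Fq,
      (∀ i, lAbs (∑ j, Y i j * polyToF (q j) - polyToF (p i)) < Real.exp (-(t i : ℝ))) ∧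
      (∀ j, lAbs (polyToF (q j)) ≤ Real.exp (s j : ℝ)) := by
  have hdim : ∑ i, t i < ∑ j, (s j + 1) := by
    simpa [Finset.sum_add_distrib, hts] using hn
  obtain ⟨q, hq0, hdeg, hfrac⟩ := exists_ne_zero_degree_le_coeff_linearForms_eq_zero Y t s hdim
  choose p hp using fun i => exists_polyToF_coeff_eq (∑ j, Y i j * polyToF (q j))
  refine ⟨q, hq0, p, fun i => lAbs_lt_exp_neg_of_coeff_eq_zero fun d hd => ?_,
    fun j => lAbs_polyToF_le (hdeg j)⟩
  rw [HahnSeries.coeff_sub]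
  rcases le_or_gt d 0 with hd0 | hd0
  · rw [hp i d hd0, sub_self]
  · rw [hfrac i d hd0 hd, coeff_polyToF_of_pos _ hd0, sub_zero]

/-- the multiplicative Dirichlet theorem for systems of linear forms.
Given nonnegative integers `t_1,...,t_m` and `s_1,...,s_n` with `∑ t = ∑ s`, and `m`
linear forms over `F = F_q((T⁻¹))` in `n` variables (the rows of the matrix `Y`),
there exist `q ∈ Λ^n \ {0}` and `p ∈ Λ^m` with `|Y_i q − p_i| < e^(−t_i)` for all `i`
and `|q_j| ≤ e^(s_j)` for all `j`. -/
theorem multiplicative_dirichlet {Fq : Type*} [Field Fq] [Fintype Fq]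
    (m n : ℕ) (hm : 0 < m) (hn : 0 < n)
    (t : Fin m → ℕ) (s : Fin n → ℕ) (hts : ∑ i, t i = ∑ j, s j)
    (Y : Matrix (Fin m) (Fin n) (LaurentSeries Fq)) :
    ∃ q : Fin n → Polynomial Fq, q ≠ 0 ∧ ∃ p : Fin m → Polynomial Fq,
      (∀ i, lAbs (∑ j, Y i j * polyToF (q j) - polyToF (p i)) < Real.exp (-(t i : ℝ))) ∧
      (∀ j, lAbs (polyToF (q j)) ≤ Real.exp (s j : ℝ)) :=
  multiplicative_dirichlet_general m n hn t s hts Y
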